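/- arXiv:2409.06880 — 2 statements merged into one kernel-verified Lean document; each statement's English description precedes it below -/
import Mathlib

section
/- Let M be a commutative additive monoid and a ∈ M with sr(a) < ∞. Then there is a unique nonnegative integer m (denoted m_{a,M}) such that for all integers k ≥ l ≥ 1, the (k,l)-stable rank condition for a holds if and only if k ≥ sr(a) and k − l ≥ m. Moreover m ≤ sr(a) − 1. -/
/-- `a` satisfies the `n`-stable rank condition in `M`. -/
def SRCond {M : Type*} [AddCommMonoid M] (a : M) (n : ℕ) : Prop :=
  ∀ x y : M, n • a + x = a + y → ∃ e : M, n • a = a + e ∧ e + x = y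

/-- The stable rank of `a`: the least positive integer `n` such that `a` satisfies
the `n`-stable rank condition, or `∞` if no such `n` exists. -/
noncomputable def sr {M : Type*} [AddCommMonoid M] (a : M) : ℕ∞ :=
  sInf {n : ℕ∞ | ∃ m : ℕ, 0 < m ∧ SRCond a m ∧ n = (m : ℕ∞)}

/-- The `(k,l)`-stable rank condition for `a`. -/
def CCond {M : Type*} [AddCommMonoid M] (a : M) (k l : ℕ) : Prop :=
  ∀ x y : M, k • a + x = l • a + y → ∃ e : M, k • a = l • a + e ∧ e + x = y

section Aux

variable {M : Type*} [AddCommMonoid M] {a : M}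

lemma ccond_congr {k k' l l' : ℕ} (hk : k = k') (hl : l = l') (h : CCond a k l) :
    CCond a k' l' := hk ▸ hl ▸ h

lemma srcond_succ {n : ℕ} (h : SRCond a n) : SRCond a (n + 1) := by
  intro x y hxy
  obtain ⟨e, he1, he2⟩ := h (a + x) y
    (by calc n • a + (a + x) = (n + 1) • a + x := by rw [succ_nsmul]; abel
          _ = a + y := hxy)
  refine ⟨e + a, ?_, ?_⟩
  · rw [succ_nsmul, he1]; abel
  · rw [← he2]; abel

lemma srcond_mono {n j : ℕ} (h : SRCond a n) (hnj : n ≤ j) : SRCond a j := by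
  induction j, hnj using Nat.le_induction with
  | base => exact h
  | succ j hj ih => exact srcond_succ ih

lemma ccond_of_srcond {n : ℕ} (h : SRCond a n) : CCond a n 1 := by
  intro x y hxy
  obtain ⟨e, he1, he2⟩ := h x y (by rwa [one_nsmul] at hxy)
  exact ⟨e, by rwa [one_nsmul], he2⟩

lemma srcond_of_ccond_one {k : ℕ} (h : CCond a k 1) : SRCond a k := by
  intro x y hxy
  obtain ⟨e, he1, he2⟩ := h x y (by rwa [one_nsmul])
  exact ⟨e, by rwa [one_nsmul] at he1, he2⟩

lemma ccond_pred {k l : ℕ} (h : CCond a k (l + 1)) : CCond a k l := by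
  intro x y hxy
  obtain ⟨e, he1, he2⟩ := h (a + x) y
    (by calc k • a + (a + x) = (k • a + x) + a := by abel
          _ = (l • a + y) + a := by rw [hxy]
          _ = (l + 1) • a + y := by rw [succ_nsmul]; abel)
  refine ⟨a + e, ?_, ?_⟩
  · rw [he1, succ_nsmul]; abel
  · rw [← he2]; abel

lemma ccond_lower {k l l' : ℕ} (h : CCond a k l) (hl : l' ≤ l) : CCond a k l' := by
  obtain ⟨t, rfl⟩ := Nat.exists_eq_add_of_le hl
  clear hl
  revert h
  induction t with
  | zero => exact fun h => h
  | succ t ih => exact fun h => ih (ccond_pred h)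

lemma ccond_succ_k {k l : ℕ} (h : CCond a k l) : CCond a (k + 1) l := by
  intro x y hxy
  obtain ⟨e, he1, he2⟩ := h (a + x) y
    (by calc k • a + (a + x) = (k + 1) • a + x := by rw [succ_nsmul]; abel
          _ = l • a + y := hxy)
  refine ⟨a + e, ?_, ?_⟩
  · rw [succ_nsmul, he1]; abel
  · rw [← he2]; abel

lemma ccond_iter_k {k l : ℕ} (h : CCond a k l) (t : ℕ) : CCond a (k + t) l := by
  induction t with
  | zero => exact h
  | succ t ih => exact ccond_succ_k ih

lemma ccond_ascent {k l : ℕ} (hs : SRCond a k) (h : CCond a k l) :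
    CCond a (k + 1) (l + 1) := by
  intro x y hxy
  obtain ⟨f, hf1, hf2⟩ := hs (a + x) (l • a + y)
    (by calc k • a + (a + x) = (k + 1) • a + x := by rw [succ_nsmul]; abel
          _ = (l + 1) • a + y := hxy
          _ = a + (l • a + y) := by rw [succ_nsmul]; abel)
  have hkey : k • a + x = l • a + y := by
    rw [← hf2, hf1]; abel
  obtain ⟨e, he1, he2⟩ := h x y hkey
  refine ⟨e, ?_, he2⟩
  rw [succ_nsmul, succ_nsmul, he1]; abel

lemma ccond_descent {k l : ℕ} (hs : SRCond a k) (h : CCond a (k + 1) (l + 1)) :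
    CCond a k l := by
  intro x y hxy
  obtain ⟨e, he1, he2⟩ := h x y
    (by calc (k + 1) • a + x = (k • a + x) + a := by rw [succ_nsmul]; abel
          _ = (l • a + y) + a := by rw [hxy]
          _ = (l + 1) • a + y := by rw [succ_nsmul]; abel)
  obtain ⟨g, hg1, hg2⟩ := hs a (l • a + e)
    (by calc k • a + a = (k + 1) • a := (succ_nsmul a k).symm
          _ = (l + 1) • a + e := he1
          _ = a + (l • a + e) := by rw [succ_nsmul]; abel)
  refine ⟨e, ?_, he2⟩
  rw [hg1, ← hg2]; abel

lemma ccond_ascend_iter {n k l : ℕ} (hall : ∀ j, n ≤ j → SRCond a j) (hk : n ≤ k)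
    (h : CCond a k l) (t : ℕ) : CCond a (k + t) (l + t) := by
  induction t with
  | zero => exact h
  | succ t ih =>
    exact ccond_ascent (hall (k + t) (le_trans hk (Nat.le_add_right _ _))) ih

lemma ccond_descend_iter {n k l : ℕ} (hall : ∀ j, n ≤ j → SRCond a j) (hk : n ≤ k)
    (t : ℕ) : CCond a (k + t) (l + t) → CCond a k l := by
  induction t with
  | zero => exact fun h => h
  | succ t ih =>
    intro h
    exact ih (ccond_descent (hall (k + t) (le_trans hk (Nat.le_add_right _ _))) h)

end Aux

theorem stmt_10 {M : Type*} [AddCommMonoid M] (a : M) (h : sr a < ⊤) :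
    (∃! m : ℕ, ∀ k l : ℕ, 1 ≤ l → l ≤ k →
      ((∀ x y : M, k • a + x = l • a + y → ∃ e : M, k • a = l • a + e ∧ e + x = y) ↔
        (sr a ≤ (k : ℕ∞) ∧ m ≤ k - l))) ∧
    (∀ m : ℕ, (∀ k l : ℕ, 1 ≤ l → l ≤ k →
      ((∀ x y : M, k • a + x = l • a + y → ∃ e : M, k • a = l • a + e ∧ e + x = y) ↔
        (sr a ≤ (k : ℕ∞) ∧ m ≤ k - l))) → (m : ℕ∞) + 1 ≤ sr a) := by
  classical
  have hne : {n : ℕ∞ | ∃ m : ℕ, 0 < m ∧ SRCond a m ∧ n = (m : ℕ∞)}.Nonempty := by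
    by_contra hc
    rw [Set.not_nonempty_iff_eq_empty] at hc
    have : sr a = ⊤ := by rw [sr, hc, sInf_empty]
    rw [this] at h
    exact lt_irrefl _ h
  obtain ⟨s, m₀, hm₀pos, hm₀sr, rfl⟩ := hne
  have hTne : {j : ℕ | 0 < j ∧ SRCond a j}.Nonempty := ⟨m₀, hm₀pos, hm₀sr⟩
  set n₀ := sInf {j : ℕ | 0 < j ∧ SRCond a j} with hn₀def
  have hn₀mem := Nat.sInf_mem hTne
  have hn₀pos : 0 < n₀ := hn₀mem.1
  have hn₀sr : SRCond a n₀ := hn₀mem.2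
  have hmin : ∀ j, 0 < j → SRCond a j → n₀ ≤ j := fun j h1 h2 => Nat.sInf_le ⟨h1, h2⟩
  have hsr : sr a = (n₀ : ℕ∞) := by
    apply le_antisymm
    · exact sInf_le ⟨n₀, hn₀pos, hn₀sr, rfl⟩
    · apply le_sInf
      rintro s ⟨j, hj, hjs, rfl⟩
      exact_mod_cast hmin j hj hjs
  have hall : ∀ j, n₀ ≤ j → SRCond a j := fun j hj => srcond_mono hn₀sr hj
  -- any valid pair has k ≥ n₀
  have hk_ge : ∀ k l : ℕ, 1 ≤ l → l ≤ k → CCond a k l → n₀ ≤ k := by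
    intro k l hl hlk hcc
    exact hmin k (by omega) (srcond_of_ccond_one (ccond_lower hcc hl))
  -- normalization: valid pair (k,l) gives valid pair (n₀ + (k-l), n₀)
  have toN : ∀ k l : ℕ, 1 ≤ l → l ≤ k → CCond a k l → CCond a (n₀ + (k - l)) n₀ := by
    intro k l hl hlk hcc
    have hk : n₀ ≤ k := hk_ge k l hl hlk hcc
    rcases le_or_gt l n₀ with hln | hln
    · have h2 := ccond_ascend_iter hall hk hcc (n₀ - l)
      exact ccond_congr (by omega) (by omega) h2
    · have hcc' : CCond a ((n₀ + (k - l)) + (l - n₀)) (n₀ + (l - n₀)) :=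
        ccond_congr (by omega) (by omega) hcc
      exact ccond_descend_iter hall (Nat.le_add_right _ _) (l - n₀) hcc'
  -- denormalization
  have fromN : ∀ d : ℕ, CCond a (n₀ + d) n₀ → ∀ k l : ℕ, 1 ≤ l → l ≤ k → n₀ ≤ k →
      d ≤ k - l → CCond a k l := by
    intro d hd k l hl hlk hk hdkl
    have h2 : CCond a (n₀ + (k - l)) n₀ :=
      ccond_congr (by omega) rfl (ccond_iter_k hd ((k - l) - d))
    rcases le_or_gt l n₀ with hln | hln
    · have h2' : CCond a (k + (n₀ - l)) (l + (n₀ - l)) :=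
        ccond_congr (by omega) (by omega) h2
      exact ccond_descend_iter hall hk (n₀ - l) h2'
    · have h3 := ccond_ascend_iter hall (Nat.le_add_right n₀ (k - l)) h2 (l - n₀)
      exact ccond_congr (by omega) (by omega) h3
  -- the minimal difference
  have hDne : (n₀ - 1) ∈ {d : ℕ | CCond a (n₀ + d) n₀} := by
    have h2 := ccond_ascend_iter hall (le_refl n₀) (ccond_of_srcond hn₀sr) (n₀ - 1)
    exact ccond_congr rfl (by omega) h2
  set m := sInf {d : ℕ | CCond a (n₀ + d) n₀} with hmdef
  have hm_mem : CCond a (n₀ + m) n₀ := Nat.sInf_mem ⟨n₀ - 1, hDne⟩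
  -- the characterization for m
  have Pm : ∀ k l : ℕ, 1 ≤ l → l ≤ k →
      (CCond a k l ↔ (sr a ≤ (k : ℕ∞) ∧ m ≤ k - l)) := by
    intro k l hl hlk
    constructor
    · intro hcc
      refine ⟨?_, Nat.sInf_le (toN k l hl hlk hcc)⟩
      rw [hsr]
      exact_mod_cast hk_ge k l hl hlk hcc
    · rintro ⟨hsrk, hmkl⟩
      have hk : n₀ ≤ k := by
        rw [hsr] at hsrk
        exact_mod_cast hsrk
      exact fromN m hm_mem k l hl hlk hk hmkl
  constructor
  · refine ⟨m, Pm, ?_⟩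
    intro m' hm'
    have key : ∀ d : ℕ, (m' ≤ d ↔ m ≤ d) := by
      intro d
      have h1 := hm' (n₀ + d) n₀ hn₀pos (Nat.le_add_right _ _)
      have h2 := Pm (n₀ + d) n₀ hn₀pos (Nat.le_add_right _ _)
      have e : n₀ + d - n₀ = d := by omega
      rw [e] at h1 h2
      have hsrle : sr a ≤ ((n₀ + d : ℕ) : ℕ∞) := by
        rw [hsr]
        exact_mod_cast Nat.le_add_right n₀ d
      constructor
      · intro hd
        exact (h2.mp (h1.mpr ⟨hsrle, hd⟩)).2
      · intro hd
        exact (h1.mp (h2.mpr ⟨hsrle, hd⟩)).2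
    exact le_antisymm ((key m).mpr le_rfl) ((key m').mp le_rfl)
  · intro m' hm'
    have h1 := (hm' n₀ 1 le_rfl hn₀pos).mp (ccond_of_srcond hn₀sr)
    have h1' : m' ≤ n₀ - 1 := h1.2
    have h2 : m' + 1 ≤ n₀ := by omega
    rw [hsr]
    exact_mod_cast h2
end

section
/- Let M be a commutative additive monoid and S a subset of M such that k·s ∈ S for every positive integer k and every s ∈ S. If the set sr(S) = { sr(s) : s ∈ S } ⊆ {1,2,...} ∪ {∞} is infinite, then sr(S) contains every integer ≥ 2. -/
section Aux
variable {M : Type*} [AddCommMonoid M]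

theorem srcond_mono_s14 {a : M} {n m : ℕ} (h : SRCond a n) (hnm : n ≤ m) : SRCond a m := by
  intro x y hxy
  obtain ⟨d, rfl⟩ := Nat.exists_eq_add_of_le hnm
  have h1 : n • a + (d • a + x) = a + y := by
    rw [← add_assoc, ← add_nsmul]; exact hxy
  obtain ⟨e, he1, he2⟩ := h _ _ h1
  refine ⟨e + d • a, ?_, ?_⟩
  · calc (n + d) • a = n • a + d • a := add_nsmul a n d
      _ = (a + e) + d • a := by rw [he1]
      _ = a + (e + d • a) := add_assoc _ _ _
  · calc e + d • a + x = e + (d • a + x) := add_assoc _ _ _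
      _ = y := he2

theorem srcond_down {a : M} {j : ℕ} (h : SRCond a j) :
    ∀ (r : ℕ) (x y : M), (j + r) • a + x = (1 + r) • a + y →
      ∃ f, j • a = a + f ∧ f + x = y := by
  intro r
  induction r with
  | zero =>
      intro x y hxy
      have hxy' : j • a + x = a + y := by simpa using hxy
      exact h x y hxy'
  | succ r ih =>
      intro x y hxy
      rw [show j + (r + 1) = (j + r) + 1 from by omega,
          show 1 + (r + 1) = (1 + r) + 1 from by omega,
          succ_nsmul, succ_nsmul, add_assoc, add_assoc] at hxy
      obtain ⟨f', hf1, hf2⟩ := ih (a + x) (a + y) hxy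
      have h2 : j • a + x = a + y := by
        calc j • a + x = (a + f') + x := by rw [hf1]
          _ = f' + (a + x) := by rw [add_comm a f', add_assoc]
          _ = a + y := hf2
      exact h x y h2

/-- Upper transfer: `SRCond a (k*n+1)` gives `SRCond (k•a) (n+1)`. -/
theorem srcond_mul_up {a : M} {k n : ℕ} (hk : 1 ≤ k) (h : SRCond a (k * n + 1)) :
    SRCond (k • a) (n + 1) := by
  intro x y hxy
  have key : ((k * n + 1) + (k - 1)) • a + x = (1 + (k - 1)) • a + y := by
    rw [show (k * n + 1) + (k - 1) = (n + 1) * k from by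
          cases k with
          | zero => omega
          | succ k' => ring_nf; omega,
        show 1 + (k - 1) = k from by omega, mul_smul]
    exact hxy
  obtain ⟨f, hf1, hf2⟩ := srcond_down h (k - 1) x y key
  refine ⟨f, ?_, hf2⟩
  calc (n + 1) • (k • a) = ((n + 1) * k) • a := (mul_smul _ _ _).symm
    _ = ((k - 1) + (k * n + 1)) • a := by
        rw [show (n + 1) * k = (k - 1) + (k * n + 1) from by
          cases k with
          | zero => omega
          | succ k' => ring_nf; omega]
    _ = (k - 1) • a + (k * n + 1) • a := add_nsmul _ _ _
    _ = (k - 1) • a + (a + f) := by rw [hf1]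
    _ = ((k - 1) • a + a) + f := (add_assoc _ _ _).symm
    _ = ((k - 1) + 1) • a + f := by rw [succ_nsmul]
    _ = k • a + f := by rw [show k - 1 + 1 = k from by omega]

/-- Weak lower transfer: `SRCond (k•a) n` gives `SRCond a (n*k)`. -/
theorem srcond_of_mul {a : M} {k n : ℕ} (hk : 1 ≤ k) (h : SRCond (k • a) n) :
    SRCond a (n * k) := by
  intro x y hxy
  have key : n • (k • a) + ((k - 1) • a + x) = k • a + y := by
    calc n • (k • a) + ((k - 1) • a + x)
        = (n * k) • a + ((k - 1) • a + x) := by rw [mul_smul]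
      _ = ((n * k) • a + (k - 1) • a) + x := (add_assoc _ _ _).symm
      _ = ((k - 1) • a + (n * k) • a) + x := by rw [add_comm ((n * k) • a)]
      _ = (k - 1) • a + ((n * k) • a + x) := add_assoc _ _ _
      _ = (k - 1) • a + (a + y) := by rw [hxy]
      _ = ((k - 1) • a + a) + y := (add_assoc _ _ _).symm
      _ = ((k - 1) + 1) • a + y := by rw [succ_nsmul]
      _ = k • a + y := by rw [show k - 1 + 1 = k from by omega]
  obtain ⟨e, he1, he2⟩ := h _ _ key
  refine ⟨e + (k - 1) • a, ?_, ?_⟩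
  · calc (n * k) • a = n • (k • a) := mul_smul _ _ _
      _ = k • a + e := he1
      _ = ((k - 1) + 1) • a + e := by rw [show k - 1 + 1 = k from by omega]
      _ = ((k - 1) • a + a) + e := by rw [succ_nsmul]
      _ = (a + (k - 1) • a) + e := by rw [add_comm ((k - 1) • a) a]
      _ = a + (e + (k - 1) • a) := by rw [add_assoc, add_comm ((k - 1) • a) e]
  · calc e + (k - 1) • a + x = e + ((k - 1) • a + x) := add_assoc _ _ _
      _ = y := he2

/-- Step lemma: `SRCond ((k+1)•a) n` with `n ≤ k` gives `SRCond (k•a) (n+1)`. -/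
theorem srcond_step {a : M} {k n : ℕ} (hnk : n ≤ k) (h : SRCond ((k + 1) • a) n) :
    SRCond (k • a) (n + 1) := by
  intro x y hxy
  have key : n • ((k + 1) • a) + ((k + 1 - n) • a + x) = (k + 1) • a + y := by
    calc n • ((k + 1) • a) + ((k + 1 - n) • a + x)
        = (n * (k + 1)) • a + ((k + 1 - n) • a + x) := by rw [mul_smul]
      _ = ((n * (k + 1)) • a + (k + 1 - n) • a) + x := (add_assoc _ _ _).symm
      _ = (n * (k + 1) + (k + 1 - n)) • a + x := by rw [add_nsmul]
      _ = (1 + (n + 1) * k) • a + x := by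
          rw [show n * (k + 1) + (k + 1 - n) = 1 + (n + 1) * k from by ring_nf; omega]
      _ = (a + ((n + 1) * k) • a) + x := by rw [add_nsmul, one_nsmul]
      _ = a + (((n + 1) * k) • a + x) := add_assoc _ _ _
      _ = a + ((n + 1) • (k • a) + x) := by rw [mul_smul]
      _ = a + (k • a + y) := by rw [hxy]
      _ = (a + k • a) + y := (add_assoc _ _ _).symm
      _ = (k + 1) • a + y := by rw [add_comm a (k • a), ← succ_nsmul]
  obtain ⟨f, hf1, hf2⟩ := h _ _ key
  refine ⟨f + (k + 1 - n) • a, ?_, ?_⟩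
  · calc (n + 1) • (k • a) = ((n + 1) * k) • a := (mul_smul _ _ _).symm
      _ = ((k - n) + n * (k + 1)) • a := by
          rw [show (n + 1) * k = (k - n) + n * (k + 1) from by ring_nf; omega]
      _ = (k - n) • a + (n * (k + 1)) • a := add_nsmul _ _ _
      _ = (k - n) • a + n • ((k + 1) • a) := by rw [mul_smul]
      _ = (k - n) • a + ((k + 1) • a + f) := by rw [hf1]
      _ = ((k - n) • a + (k + 1) • a) + f := (add_assoc _ _ _).symm
      _ = ((k - n) + (k + 1)) • a + f := by rw [← add_nsmul]
      _ = (k + (k + 1 - n)) • a + f := by rw [show (k - n) + (k + 1) = k + (k + 1 - n) from by omega]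
      _ = (k • a + (k + 1 - n) • a) + f := by rw [add_nsmul]
      _ = k • a + ((k + 1 - n) • a + f) := add_assoc _ _ _
      _ = k • a + (f + (k + 1 - n) • a) := by rw [add_comm ((k + 1 - n) • a) f]
  · calc f + (k + 1 - n) • a + x = f + ((k + 1 - n) • a + x) := add_assoc _ _ _
      _ = y := hf2

theorem sr_le_of_srcond {a : M} {n : ℕ} (hn : 0 < n) (h : SRCond a n) :
    sr a ≤ (n : ℕ∞) := by
  unfold sr
  apply sInf_le
  exact ⟨n, hn, h, rfl⟩

theorem srcond_of_sr_eq {a : M} {n : ℕ} (h : sr a = (n : ℕ∞)) :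
    0 < n ∧ SRCond a n := by
  classical
  set W : Set ℕ := {m | 0 < m ∧ SRCond a m} with hW
  have hne : W.Nonempty := by
    by_contra hemp
    have hempty : {q : ℕ∞ | ∃ m : ℕ, 0 < m ∧ SRCond a m ∧ q = (m : ℕ∞)} = ∅ := by
      ext q
      simp only [Set.mem_setOf_eq, Set.mem_empty_iff_false, iff_false]
      rintro ⟨m, hm1, hm2, rfl⟩
      exact hemp ⟨m, hm1, hm2⟩
    rw [sr, hempty, sInf_empty] at h
    simp at h
  have hmem := Nat.sInf_mem hne
  have hsr : sr a = ((sInf W : ℕ) : ℕ∞) := by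
    apply le_antisymm
    · unfold sr
      apply sInf_le
      exact ⟨sInf W, hmem.1, hmem.2, rfl⟩
    · unfold sr
      apply le_sInf
      rintro q ⟨m, hm1, hm2, rfl⟩
      have hmW : m ∈ W := ⟨hm1, hm2⟩
      exact_mod_cast Nat.sInf_le hmW
  rw [h] at hsr
  have hn' : n = sInf W := by exact_mod_cast hsr
  rw [hn']
  exact ⟨hmem.1, hmem.2⟩

end Aux

theorem enat_ne_top_exists {q : ℕ∞} (h : q ≠ ⊤) : ∃ v : ℕ, q = (v : ℕ∞) := by
  lift q to ℕ using h
  exact ⟨q, rfl⟩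

theorem stmt_14 {M : Type*} [AddCommMonoid M] (S : Set M)
    (hS : ∀ k : ℕ, 0 < k → ∀ s ∈ S, k • s ∈ S)
    (h : (sr '' S).Infinite) :
    ∀ k : ℕ, 2 ≤ k → (k : ℕ∞) ∈ sr '' S := by
  classical
  intro t ht
  -- Step 1: get an element of S with large finite stable rank.
  set B : ℕ := (t - 1) * (t - 1) + 1 with hB
  have hbig : ∃ s ∈ S, ∃ Mv : ℕ, sr s = (Mv : ℕ∞) ∧ B ≤ Mv := by
    by_contra hno
    push_neg at hno
    have hsub : sr '' S ⊆ insert (⊤ : ℕ∞) ((fun m : ℕ => (m : ℕ∞)) '' (Set.Iio B)) := by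
      rintro q ⟨s, hs, rfl⟩
      rcases eq_or_ne (sr s) ⊤ with htop | hfin
      · rw [htop]; exact Set.mem_insert _ _
      · obtain ⟨m, hm⟩ := WithTop.ne_top_iff_exists.mp hfin
        refine Set.mem_insert_of_mem _ ⟨m, ?_, hm⟩
        exact hno s hs m hm.symm
    exact (((Set.finite_Iio B).image _).insert (⊤ : ℕ∞)).not_infinite (h.mono hsub)
  obtain ⟨s, hs, Mv, hsrM, hMB⟩ := hbig
  obtain ⟨hM0, hSRM⟩ := srcond_of_sr_eq hsrM
  have htB : t ≤ B := by
    have h1 : 1 ≤ t - 1 := by omega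
    have h2 : (t - 1) * 1 ≤ (t - 1) * (t - 1) := Nat.mul_le_mul_left _ h1
    omega
  have htM : t ≤ Mv := le_trans htB hMB
  rcases eq_or_lt_of_le ht with h2 | h3
  · -- case t = 2
    subst h2
    have hM2 : 2 ≤ Mv := htM
    have hk1 : 1 ≤ Mv - 1 := by omega
    have hcond : SRCond s ((Mv - 1) * 1 + 1) := by
      rw [show (Mv - 1) * 1 + 1 = Mv from by omega]; exact hSRM
    have hup : SRCond ((Mv - 1) • s) 2 := srcond_mul_up hk1 hcond
    have hle2 : sr ((Mv - 1) • s) ≤ ((2 : ℕ) : ℕ∞) :=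
      sr_le_of_srcond (by norm_num) hup
    have heq2 : sr ((Mv - 1) • s) = ((2 : ℕ) : ℕ∞) := by
      rcases lt_or_eq_of_le hle2 with hlt | heq
      · exfalso
        have hne : sr ((Mv - 1) • s) ≠ ⊤ := by
          intro hc; rw [hc] at hlt; exact absurd hlt (by simp)
        obtain ⟨v, hv⟩ := enat_ne_top_exists hne
        have hv2 : v < 2 := by
          rw [hv] at hlt; exact_mod_cast hlt
        obtain ⟨hv0, hvc⟩ := srcond_of_sr_eq hv
        have hv1 : v = 1 := by omega
        rw [hv1] at hvc
        have hw : SRCond s (1 * (Mv - 1)) := srcond_of_mul hk1 hvc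
        have : sr s ≤ ((1 * (Mv - 1) : ℕ) : ℕ∞) := sr_le_of_srcond (by omega) hw
        rw [hsrM] at this
        have : Mv ≤ 1 * (Mv - 1) := by exact_mod_cast this
        omega
      · exact_mod_cast heq
    exact ⟨(Mv - 1) • s, hS (Mv - 1) (by omega) s hs, by exact_mod_cast heq2⟩
  · -- case 3 ≤ t
    have ht3 : 3 ≤ t := h3
    set K : Set ℕ := {k | 1 ≤ k ∧ (t : ℕ∞) ≤ sr (k • s)} with hK
    have h1K : 1 ∈ K :=
      ⟨le_refl 1, by rw [one_smul, hsrM]; exact_mod_cast htM⟩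
    have hKbdd : BddAbove K := by
      refine ⟨Mv, ?_⟩
      rintro k ⟨hk1, hkt⟩
      by_contra hgt
      push_neg at hgt
      have hcond : SRCond s (k * 1 + 1) := by
        rw [mul_one]; exact srcond_mono_s14 hSRM (by omega)
      have hup : SRCond (k • s) 2 := srcond_mul_up hk1 hcond
      have hle : sr (k • s) ≤ ((2 : ℕ) : ℕ∞) := sr_le_of_srcond (by norm_num) hup
      have : (t : ℕ∞) ≤ ((2 : ℕ) : ℕ∞) := le_trans hkt hle
      have : t ≤ 2 := by exact_mod_cast this
      omega
    set k : ℕ := sSup K with hkdef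
    have hkK : k ∈ K := Nat.sSup_mem ⟨1, h1K⟩ hKbdd
    have hknot : k + 1 ∉ K := by
      intro hc
      have := le_csSup hKbdd hc
      omega
    have hlt : sr ((k + 1) • s) < (t : ℕ∞) := by
      by_contra hge
      push_neg at hge
      exact hknot ⟨by omega, hge⟩
    have hne : sr ((k + 1) • s) ≠ ⊤ := by
      intro hc; rw [hc] at hlt
      exact absurd hlt (by simp)
    obtain ⟨n, hn⟩ := enat_ne_top_exists hne
    have hnt : n < t := by rw [hn] at hlt; exact_mod_cast hlt
    obtain ⟨hn0, hncond⟩ := srcond_of_sr_eq hn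
    -- weak lower bound gives Mv ≤ n * (k+1)
    have hw : SRCond s (n * (k + 1)) := srcond_of_mul (by omega) hncond
    have hsle : sr s ≤ ((n * (k + 1) : ℕ) : ℕ∞) :=
      sr_le_of_srcond (by positivity) hw
    have hMle : Mv ≤ n * (k + 1) := by
      rw [hsrM] at hsle; exact_mod_cast hsle
    -- hence k+1 > t-1, so n ≤ t-1 ≤ k
    have hkbig : t - 1 < k + 1 := by
      by_contra hsmall
      push_neg at hsmall
      have hmul : n * (k + 1) ≤ (t - 1) * (t - 1) :=
        Nat.mul_le_mul (by omega) hsmall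
      have : (t - 1) * (t - 1) + 1 ≤ (t - 1) * (t - 1) :=
        le_trans hMB (le_trans hMle hmul)
      exact Nat.not_succ_le_self _ this
    have hnk : n ≤ k := by omega
    -- step lemma pins sr (k • s) = t
    have hstep : SRCond (k • s) (n + 1) := srcond_step hnk hncond
    have hles : sr (k • s) ≤ ((n + 1 : ℕ) : ℕ∞) := sr_le_of_srcond (by omega) hstep
    have htle : (t : ℕ∞) ≤ sr (k • s) := hkK.2
    have hfinal : sr (k • s) = (t : ℕ∞) := by
      apply le_antisymm
      · exact le_trans hles (by exact_mod_cast (by omega : n + 1 ≤ t))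
      · exact htle
    exact ⟨k • s, hS k (by omega) s hs, hfinal⟩
end
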